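/- arXiv:1402.4187 — 2 statements merged into one kernel-verified Lean document; each statement's English description precedes it below -/
import Mathlib

section
/- If a policy μ is admissible on a subset Ω containing a neighborhood N₀ of the origin, and Υ ⊆ D is a subset of the region of attraction R_A(μ) on which trajectories are feasible (remain in D for all t ≥ 0), then the value function V^μ(x₀) = ∫₀^∞ r(φ(τ;x₀,μ), μ(φ(τ;x₀,μ))) dτ is finite for every x₀ ∈ Υ, i.e., μ is admissible on Υ. -/
/-!
The trajectory from `x₀ ∈ Υ` tends to `0`, so it reaches `N₀ ⊆ Ω` at some time `T ≥ 0`.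
The cost accumulated on `[0, T]` is finite by continuity, and by the semigroup property the
cost after time `T` is the full cost of the trajectory from `φ x₀ T ∈ Ω`, which is finite by
admissibility on `Ω`.
-/

open MeasureTheory Set Filter

section

variable {E : Type*} [NormedAddCommGroup E]

theorem integrableOn_Ioi_comp_add_right_iff {f : ℝ → E} (a T : ℝ) :
    IntegrableOn (fun s => f (s + T)) (Ioi a) ↔ IntegrableOn f (Ioi (a + T)) := by
  rw [← (measurePreserving_add_right volume T).integrableOn_comp_preimage
    (measurableEmbedding_addRight T) (f := f), preimage_add_const_Ioi, add_sub_cancel_right]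
  rfl

theorem Continuous.integrableOn_Ioi_of_le {f : ℝ → E} (hf : Continuous f) {a b : ℝ}
    (hab : a ≤ b) (h : IntegrableOn f (Ioi b)) : IntegrableOn f (Ioi a) :=
  Ioc_union_Ioi_eq_Ioi hab ▸ hf.integrableOn_Ioc.union h

theorem integrableOn_Ioi_of_semigroup {X : Type*} {φ : X → ℝ → X} {ρ : X → E}
    (hφ_semigroup : ∀ x₀ t s, 0 ≤ t → 0 ≤ s → φ x₀ (t + s) = φ (φ x₀ t) s)
    {x₀ : X} {T : ℝ} (hT : 0 ≤ T) (h : IntegrableOn (fun s => ρ (φ (φ x₀ T) s)) (Ioi 0)) :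
    IntegrableOn (fun τ => ρ (φ x₀ τ)) (Ioi T) := by
  rw [← zero_add T, ← integrableOn_Ioi_comp_add_right_iff]
  refine h.congr_fun (fun s hs => ?_) measurableSet_Ioi
  rw [add_comm s T, hφ_semigroup x₀ T s hT hs.le]

end

theorem admissibility_on_feasible_attraction_subset_general {n : ℕ}
    (Ω Υ N₀ : Set (Fin n → ℝ))
    -- trajectory map: `φ x₀ t = φ(t; x₀, μ)`
    (φ : (Fin n → ℝ) → ℝ → (Fin n → ℝ))
    -- running cost along the state: `ρ x = r (x, μ x) = Q x + μ(x)ᵀ R μ(x)`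
    (ρ : (Fin n → ℝ) → ℝ)
    (hρ_cont : Continuous ρ)
    -- trajectories start at `x₀`, are continuous in time, and satisfy the semigroup property
    (hφ_cont : ∀ x₀, Continuous (φ x₀))
    (hφ_semigroup : ∀ x₀ t s, 0 ≤ t → 0 ≤ s → φ x₀ (t + s) = φ (φ x₀ t) s)
    -- `N₀` is a neighborhood of the origin contained in `Ω`
    (hN₀_sub : N₀ ⊆ Ω) (hN₀_nhds : N₀ ∈ nhds (0 : Fin n → ℝ))
    -- admissibility of `μ` on `Ω`: trajectories from `Ω` stay in `D`, tend to `0`,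
    -- and the value function is finite on `Ω`
    (hΩ_finite : ∀ x₀ ∈ Ω, IntegrableOn (fun τ => ρ (φ x₀ τ)) (Ioi 0))
    -- `Υ ⊆ D` is a feasible subset of the region of attraction `R_A(μ)`
    (hΥ_attr : ∀ x₀ ∈ Υ, Tendsto (φ x₀) atTop (nhds 0)) :
    ∀ x₀ ∈ Υ, IntegrableOn (fun τ => ρ (φ x₀ τ)) (Ioi 0) := by
  intro x₀ hx₀
  obtain ⟨T, hT_mem, hT_nonneg⟩ :=
    ((hΥ_attr x₀ hx₀).eventually_mem hN₀_nhds |>.and (eventually_ge_atTop 0)).exists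
  have h_tail : IntegrableOn (fun τ => ρ (φ x₀ τ)) (Ioi T) :=
    integrableOn_Ioi_of_semigroup hφ_semigroup hT_nonneg (hΩ_finite _ (hN₀_sub hT_mem))
  exact (hρ_cont.comp (hφ_cont x₀)).integrableOn_Ioi_of_le hT_nonneg h_tail

/-- If the policy `μ` is admissible on `Ω ⊇ N₀` (a neighborhood of the origin),
and `Υ ⊆ D` is a feasible subset of the region of attraction of `μ` (trajectories starting
in `Υ` remain in `D` and tend to the origin), then the value function
`V^μ(x₀) = ∫₀^∞ ρ(φ(τ;x₀,μ)) dτ` (with running cost `ρ(x) = r(x, μ(x))`) is finite for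
every `x₀ ∈ Υ`; i.e. `μ` is admissible on `Υ`. Finiteness of the value is expressed as
integrability of the running cost along the trajectory. -/
theorem admissibility_on_feasible_attraction_subset {n : ℕ}
    (D Ω Υ N₀ : Set (Fin n → ℝ))
    -- trajectory map: `φ x₀ t = φ(t; x₀, μ)`
    (φ : (Fin n → ℝ) → ℝ → (Fin n → ℝ))
    -- running cost along the state: `ρ x = r (x, μ x) = Q x + μ(x)ᵀ R μ(x)`
    (ρ : (Fin n → ℝ) → ℝ)
    (hρ_nonneg : ∀ x, 0 ≤ ρ x) (hρ_cont : Continuous ρ)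
    -- trajectories start at `x₀`, are continuous in time, and satisfy the semigroup property
    (hφ_init : ∀ x₀, φ x₀ 0 = x₀)
    (hφ_cont : ∀ x₀, Continuous (φ x₀))
    (hφ_semigroup : ∀ x₀ t s, 0 ≤ t → 0 ≤ s → φ x₀ (t + s) = φ (φ x₀ t) s)
    -- `N₀` is a neighborhood of the origin contained in `Ω`
    (hN₀_sub : N₀ ⊆ Ω) (hN₀_nhds : N₀ ∈ nhds (0 : Fin n → ℝ))
    -- admissibility of `μ` on `Ω`: trajectories from `Ω` stay in `D`, tend to `0`,
    -- and the value function is finite on `Ω`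
    (hΩD : Ω ⊆ D)
    (hΩ_feas : ∀ x₀ ∈ Ω, ∀ t : ℝ, 0 ≤ t → φ x₀ t ∈ D)
    (hΩ_attr : ∀ x₀ ∈ Ω, Tendsto (φ x₀) atTop (nhds 0))
    (hΩ_finite : ∀ x₀ ∈ Ω, IntegrableOn (fun τ => ρ (φ x₀ τ)) (Ioi 0))
    -- `Υ ⊆ D` is a feasible subset of the region of attraction `R_A(μ)`
    (hΥD : Υ ⊆ D)
    (hΥ_feas : ∀ x₀ ∈ Υ, ∀ t : ℝ, 0 ≤ t → φ x₀ t ∈ D)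
    (hΥ_attr : ∀ x₀ ∈ Υ, Tendsto (φ x₀) atTop (nhds 0)) :
    ∀ x₀ ∈ Υ, IntegrableOn (fun τ => ρ (φ x₀ τ)) (Ioi 0) :=
  admissibility_on_feasible_attraction_subset_general Ω Υ N₀ φ ρ hρ_cont hφ_cont hφ_semigroup
    hN₀_sub hN₀_nhds hΩ_finite hΥ_attr
end

section
/- Suppose μᵢ is admissible on Ωᵢ, V^{μᵢ} ∈ C¹(Ωᵢ) satisfies the Lyapunov equation ∇V^{μᵢ}ᵀ(f+gμᵢ) = −Q − μᵢᵀRμᵢ on Ωᵢ, and the improved policy is μᵢ₊₁(x) = −½R⁻¹g(x)ᵀ∇V^{μᵢ}(x). Then the derivative of V^{μᵢ} along the new closed-loop vector field satisfies ∇V^{μᵢ}(x)ᵀ(f(x)+g(x)μᵢ₊₁(x)) = −Q(x) − μᵢ(x)ᵀRμᵢ(x) − 2μᵢ₊₁(x)ᵀR(μᵢ₊₁(x) − μᵢ(x)) ≤ −(Q(x) + μᵢ₊₁(x)ᵀRμᵢ₊₁(x)) for all x ∈ Ωᵢ. -/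
/-!
Since `R` is symmetric and invertible, the improved policy `μᵢ₊₁ = −½R⁻¹gᵀp` means exactly
`gᵀp = −2Rμᵢ₊₁`, so the control term of the derivative is an `R`-weighted inner product:
`pᵀg v = −2 μᵢ₊₁ᵀR v`. Taking `v = μᵢ₊₁ − μᵢ` and adding the Lyapunov equation for `μᵢ` gives the
identity. Completing the square,
`μᵢᵀRμᵢ + 2μᵢ₊₁ᵀR(μᵢ₊₁ − μᵢ) = μᵢ₊₁ᵀRμᵢ₊₁ + (μᵢ₊₁ − μᵢ)ᵀR(μᵢ₊₁ − μᵢ)`,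
and the last term is nonnegative because `R` is positive definite.
-/

open Matrix

section WeightedDotProduct

variable {ι : Type*} [Fintype ι]

theorem Matrix.IsSymm.dotProduct_mulVec_comm {α : Type*} [CommSemiring α] {R : Matrix ι ι α}
    (hR : R.IsSymm) (a b : ι → α) : a ⬝ᵥ (R *ᵥ b) = b ⬝ᵥ (R *ᵥ a) := by
  simpa only [hR.eq] using dotProduct_transpose_mulVec R a b

theorem Matrix.IsSymm.quadForm_add_two_mul_dotProduct_mulVec_sub {α : Type*} [CommRing α]
    {R : Matrix ι ι α} (hR : R.IsSymm) (a b : ι → α) :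
    a ⬝ᵥ (R *ᵥ a) + 2 * (b ⬝ᵥ (R *ᵥ (b - a)))
      = b ⬝ᵥ (R *ᵥ b) + (b - a) ⬝ᵥ (R *ᵥ (b - a)) := by
  simp only [mulVec_sub, dotProduct_sub, sub_dotProduct]
  linear_combination -hR.dotProduct_mulVec_comm b a

variable [DecidableEq ι] {κ : Type*} [Fintype κ]

theorem Matrix.transpose_mulVec_eq_of_eq_smul_inv_mulVec {R : Matrix ι ι ℝ} (hR : IsUnit R.det)
    {G : Matrix κ ι ℝ} {p : κ → ℝ} {u : ι → ℝ} (hu : u = -(1 / 2 : ℝ) • (R⁻¹ *ᵥ (Gᵀ *ᵥ p))) :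
    Gᵀ *ᵥ p = (-2 : ℝ) • (R *ᵥ u) := by
  rw [hu, mulVec_smul, mulVec_mulVec, mul_nonsing_inv R hR, one_mulVec, smul_smul]
  norm_num

theorem Matrix.dotProduct_mulVec_eq_of_eq_smul_inv_mulVec {R : Matrix ι ι ℝ} (hRsym : R.IsSymm)
    (hR : IsUnit R.det) {G : Matrix κ ι ℝ} {p : κ → ℝ} {u : ι → ℝ}
    (hu : u = -(1 / 2 : ℝ) • (R⁻¹ *ᵥ (Gᵀ *ᵥ p))) (v : ι → ℝ) :
    p ⬝ᵥ (G *ᵥ v) = -2 * (u ⬝ᵥ (R *ᵥ v)) := by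
  rw [← dotProduct_transpose_mulVec, transpose_mulVec_eq_of_eq_smul_inv_mulVec hR hu,
    dotProduct_smul, smul_eq_mul, hRsym.dotProduct_mulVec_comm]

end WeightedDotProduct

theorem policy_improvement_derivative_general {n m : ℕ}
    (Ω : Set (Fin n → ℝ))
    (f : (Fin n → ℝ) → (Fin n → ℝ))
    (g : (Fin n → ℝ) → Matrix (Fin n) (Fin m) ℝ)
    (R : Matrix (Fin m) (Fin m) ℝ) (hR : R.PosDef)
    (Q : (Fin n → ℝ) → ℝ)
    (μ μnext : (Fin n → ℝ) → (Fin m → ℝ))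
    (p : (Fin n → ℝ) → (Fin n → ℝ))  -- the gradient ∇V^{μᵢ}
    (hLyap : ∀ x ∈ Ω,
      p x ⬝ᵥ (f x + g x *ᵥ μ x) = -(Q x) - μ x ⬝ᵥ (R *ᵥ μ x))
    (hImprove : ∀ x ∈ Ω,
      μnext x = -(1 / 2 : ℝ) • (R⁻¹ *ᵥ ((g x)ᵀ *ᵥ p x))) :
    ∀ x ∈ Ω,
      p x ⬝ᵥ (f x + g x *ᵥ μnext x)
          = -(Q x) - μ x ⬝ᵥ (R *ᵥ μ x) - 2 * (μnext x ⬝ᵥ (R *ᵥ (μnext x - μ x))) ∧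
      p x ⬝ᵥ (f x + g x *ᵥ μnext x) ≤ -(Q x + μnext x ⬝ᵥ (R *ᵥ μnext x)) := by
  intro x hx
  have hRsym : R.IsSymm := isHermitian_iff_isSymm.mp hR.isHermitian
  have hRdet : IsUnit R.det := (isUnit_iff_isUnit_det R).mp hR.isUnit
  have hcontrol := dotProduct_mulVec_eq_of_eq_smul_inv_mulVec hRsym hRdet (hImprove x hx)
  have hderiv : p x ⬝ᵥ (f x + g x *ᵥ μnext x)
      = -(Q x) - μ x ⬝ᵥ (R *ᵥ μ x) - 2 * (μnext x ⬝ᵥ (R *ᵥ (μnext x - μ x))) := by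
    have hsplit : f x + g x *ᵥ μnext x = (f x + g x *ᵥ μ x) + g x *ᵥ (μnext x - μ x) := by
      rw [mulVec_sub]; abel
    rw [hsplit, dotProduct_add, hLyap x hx, hcontrol]
    ring
  have hsquare := hRsym.quadForm_add_two_mul_dotProduct_mulVec_sub (μ x) (μnext x)
  have hgap := hR.posSemidef.dotProduct_mulVec_nonneg (μnext x - μ x)
  rw [star_trivial] at hgap
  exact ⟨hderiv, by linarith⟩

/-- If `V^{μᵢ}` (with gradient field `p`) satisfies the Lyapunov equation
`pᵀ(f + g μᵢ) = −Q − μᵢᵀRμᵢ` on `Ωᵢ` and `μᵢ₊₁ = −½R⁻¹gᵀp`, then along the new closed loop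
`pᵀ(f + g μᵢ₊₁) = −Q − μᵢᵀRμᵢ − 2μᵢ₊₁ᵀR(μᵢ₊₁ − μᵢ) ≤ −(Q + μᵢ₊₁ᵀRμᵢ₊₁)` on `Ωᵢ`. -/
theorem policy_improvement_derivative {n m : ℕ}
    (Ω : Set (Fin n → ℝ))
    (f : (Fin n → ℝ) → (Fin n → ℝ))
    (g : (Fin n → ℝ) → Matrix (Fin n) (Fin m) ℝ)
    (R : Matrix (Fin m) (Fin m) ℝ) (hRsym : R.IsSymm) (hR : R.PosDef)
    (Q : (Fin n → ℝ) → ℝ)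
    (μ μnext : (Fin n → ℝ) → (Fin m → ℝ))
    (p : (Fin n → ℝ) → (Fin n → ℝ))  -- the gradient ∇V^{μᵢ}
    (hLyap : ∀ x ∈ Ω,
      p x ⬝ᵥ (f x + g x *ᵥ μ x) = -(Q x) - μ x ⬝ᵥ (R *ᵥ μ x))
    (hImprove : ∀ x ∈ Ω,
      μnext x = -(1 / 2 : ℝ) • (R⁻¹ *ᵥ ((g x)ᵀ *ᵥ p x))) :
    ∀ x ∈ Ω,
      p x ⬝ᵥ (f x + g x *ᵥ μnext x)
          = -(Q x) - μ x ⬝ᵥ (R *ᵥ μ x) - 2 * (μnext x ⬝ᵥ (R *ᵥ (μnext x - μ x))) ∧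
      p x ⬝ᵥ (f x + g x *ᵥ μnext x) ≤ -(Q x + μnext x ⬝ᵥ (R *ᵥ μnext x)) :=
  policy_improvement_derivative_general Ω f g R hR Q μ μnext p hLyap hImprove
end
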